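/- arXiv:2412.20115 — 2 statements merged into one kernel-verified Lean document; each statement's English description precedes it below -/
import Mathlib

section
/- Let f : E → ℝ be differentiable, L-smooth, and μ-strongly convex with 0 < μ ≤ L, and let x* ∈ E be a global minimizer of f. Let x : ℕ → E be the gradient descent sequence with constant step size λ = 1/L starting from x_0. Then for every n ≥ 1, f(x_n) - f(x*) ≤ (L/2)·(1 - μ/L)^n·‖x_0 - x*‖². -/
/-!
Strong convexity gives `⟪∇f x, x - x*⟫ ≥ f x - f x* + (μ/2)‖x - x*‖²`, and the descent lemma
applied to a gradient step gives `‖∇f x‖² ≤ 2L (f x - f x*)`. Expanding `‖x - ∇f x / L - x*‖²`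
with these two bounds shows that each step contracts the squared distance to `x*` by the factor
`1 - μ/L`. Since `∇f x* = 0`, the descent lemma at `x*` turns this into
`f xₙ - f x* ≤ (L/2)‖xₙ - x*‖²`.
-/

open RealInnerProductSpace

section GradientDescent

variable {E : Type*} [NormedAddCommGroup E] [InnerProductSpace ℝ E]
  {f : E → ℝ} {f' : E → E} {L μ : ℝ}

theorem inner_gradient_ge_of_strongConvex
    (hstrong : ∀ x y, f x + ⟪f' x, y - x⟫ + (μ / 2) * ‖y - x‖ ^ 2 ≤ f y) (a y : E) :
    f a - f y + μ / 2 * ‖a - y‖ ^ 2 ≤ ⟪f' a, a - y⟫ := by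
  have h := hstrong a y
  rw [← neg_sub a y, inner_neg_right, norm_neg] at h
  linarith

variable [CompleteSpace E]

theorem le_add_inner_add_sq_of_lipschitz_gradient (hdiff : ∀ x, HasGradientAt f (f' x) x)
    (hsmooth : ∀ x y, ‖f' x - f' y‖ ≤ L * ‖x - y‖) (a b : E) :
    f b ≤ f a + ⟪f' a, b - a⟫ + L / 2 * ‖b - a‖ ^ 2 := by
  set v := b - a
  -- `ψ t` is the gap between `f` and the quadratic bound at `a + t • v`.
  let ψ : ℝ → ℝ := fun t => f (a + t • v) - t * ⟪f' a, v⟫ - L / 2 * t ^ 2 * ‖v‖ ^ 2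
  have hψ : ∀ t, HasDerivAt ψ (⟪f' (a + t • v) - f' a, v⟫ - L * t * ‖v‖ ^ 2) t := by
    intro t
    have hline : HasDerivAt (fun t : ℝ => a + t • v) v t := by
      simpa using ((hasDerivAt_id t).smul_const v).const_add a
    have hf : HasDerivAt (fun t : ℝ => f (a + t • v)) ⟪f' (a + t • v), v⟫ t := by
      have h := (hdiff (a + t • v)).hasFDerivAt.comp_hasDerivAt t hline
      simp only [InnerProductSpace.toDual_apply_apply] at h
      exact h
    have hq := ((hasDerivAt_pow 2 t).const_mul (L / 2)).mul_const (‖v‖ ^ 2)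
    refine ((hf.sub ((hasDerivAt_id t).mul_const ⟪f' a, v⟫)).sub hq).congr_deriv ?_
    rw [inner_sub_left]
    push_cast
    ring
  have hψ_nonpos : ∀ t ∈ interior (Set.Icc (0 : ℝ) 1), deriv ψ t ≤ 0 := by
    intro t ht
    rw [interior_Icc] at ht
    rw [(hψ t).deriv, sub_nonpos]
    calc ⟪f' (a + t • v) - f' a, v⟫ ≤ ‖f' (a + t • v) - f' a‖ * ‖v‖ := real_inner_le_norm _ _
      _ ≤ L * ‖t • v‖ * ‖v‖ := by
        gcongr
        simpa using hsmooth (a + t • v) a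
      _ = L * t * ‖v‖ ^ 2 := by rw [norm_smul, Real.norm_of_nonneg ht.1.le]; ring
  have hanti : AntitoneOn ψ (Set.Icc 0 1) :=
    antitoneOn_of_deriv_nonpos (convex_Icc 0 1)
      (fun t _ => (hψ t).continuousAt.continuousWithinAt)
      (fun t _ => (hψ t).differentiableAt.differentiableWithinAt) hψ_nonpos
  have h01 := hanti (Set.left_mem_Icc.2 zero_le_one) (Set.right_mem_Icc.2 zero_le_one) zero_le_one
  simp only [ψ, v, one_smul, add_sub_cancel, zero_smul, add_zero] at h01
  linarith

theorem gradient_eq_zero_of_isMinimizer {xstar : E} (hdiff : HasGradientAt f (f' xstar) xstar)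
    (hmin : ∀ y, f xstar ≤ f y) : f' xstar = 0 := by
  have hloc : IsLocalMin f xstar := Filter.Eventually.of_forall hmin
  simpa using hloc.hasFDerivAt_eq_zero hdiff.hasFDerivAt

theorem le_sub_sq_norm_of_gradient_step (hL : 0 < L) (hdiff : ∀ x, HasGradientAt f (f' x) x)
    (hsmooth : ∀ x y, ‖f' x - f' y‖ ≤ L * ‖x - y‖) (a : E) :
    f (a - (1 / L) • f' a) ≤ f a - ‖f' a‖ ^ 2 / (2 * L) := by
  have h := le_add_inner_add_sq_of_lipschitz_gradient hdiff hsmooth a (a - (1 / L) • f' a)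
  rw [sub_sub_cancel_left, inner_neg_right, real_inner_smul_right, real_inner_self_eq_norm_sq,
    norm_neg, norm_smul, Real.norm_of_nonneg (by positivity)] at h
  calc _ ≤ _ := h
    _ = _ := by field_simp; ring

theorem sq_norm_gradient_le (hL : 0 < L) (hdiff : ∀ x, HasGradientAt f (f' x) x)
    (hsmooth : ∀ x y, ‖f' x - f' y‖ ≤ L * ‖x - y‖) {xstar : E} (hmin : ∀ y, f xstar ≤ f y)
    (a : E) : ‖f' a‖ ^ 2 ≤ 2 * L * (f a - f xstar) := by
  have h := (hmin _).trans (le_sub_sq_norm_of_gradient_step hL hdiff hsmooth a)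
  rw [← div_le_iff₀' (by positivity)]
  linarith

theorem sq_norm_gradient_step_sub_le (hL : 0 < L) (hdiff : ∀ x, HasGradientAt f (f' x) x)
    (hsmooth : ∀ x y, ‖f' x - f' y‖ ≤ L * ‖x - y‖)
    (hstrong : ∀ x y, f x + ⟪f' x, y - x⟫ + (μ / 2) * ‖y - x‖ ^ 2 ≤ f y)
    {xstar : E} (hmin : ∀ y, f xstar ≤ f y) (a : E) :
    ‖a - (1 / L) • f' a - xstar‖ ^ 2 ≤ (1 - μ / L) * ‖a - xstar‖ ^ 2 := by
  have hexpand : ‖a - (1 / L) • f' a - xstar‖ ^ 2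
      = ‖a - xstar‖ ^ 2 - 2 / L * ⟪f' a, a - xstar⟫ + ‖f' a‖ ^ 2 / L ^ 2 := by
    rw [sub_right_comm, norm_sub_sq_real, real_inner_smul_right, norm_smul,
      Real.norm_of_nonneg (by positivity), real_inner_comm]
    field_simp
  have hinner :
      2 / L * (f a - f xstar + μ / 2 * ‖a - xstar‖ ^ 2) ≤ 2 / L * ⟪f' a, a - xstar⟫ := by
    gcongr
    exact inner_gradient_ge_of_strongConvex hstrong a xstar
  have hgrad : ‖f' a‖ ^ 2 / L ^ 2 ≤ 2 / L * (f a - f xstar) := by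
    rw [div_le_iff₀ (by positivity)]
    calc ‖f' a‖ ^ 2 ≤ 2 * L * (f a - f xstar) := sq_norm_gradient_le hL hdiff hsmooth hmin a
      _ = _ := by field_simp
  have hrate : (1 - μ / L) * ‖a - xstar‖ ^ 2
      = ‖a - xstar‖ ^ 2 - 2 / L * (μ / 2 * ‖a - xstar‖ ^ 2) := by
    ring
  linarith

end GradientDescent

theorem gd_strongly_convex_value_rate {E : Type*} [NormedAddCommGroup E]
    [InnerProductSpace ℝ E] [CompleteSpace E]
    (f : E → ℝ) (f' : E → E) (L μ : ℝ) (hμ : 0 < μ) (hμL : μ ≤ L)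
    (hdiff : ∀ x, HasGradientAt f (f' x) x)
    (hsmooth : ∀ x y, ‖f' x - f' y‖ ≤ L * ‖x - y‖)
    (hstrong : ∀ x y, f x + ⟪f' x, y - x⟫ + (μ / 2) * ‖y - x‖ ^ 2 ≤ f y)
    (xstar : E) (hmin : ∀ y, f xstar ≤ f y)
    (x : ℕ → E)
    (hiter : ∀ k, x (k + 1) = x k - (1 / L) • f' (x k)) :
    ∀ n : ℕ, 1 ≤ n →
      f (x n) - f xstar ≤ (L / 2) * (1 - μ / L) ^ n * ‖x 0 - xstar‖ ^ 2 := by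
  intro n _
  have hL : 0 < L := hμ.trans_le hμL
  have hrate : 0 ≤ 1 - μ / L := sub_nonneg.2 ((div_le_one hL).2 hμL)
  have hdist : ‖x n - xstar‖ ^ 2 ≤ (1 - μ / L) ^ n * ‖x 0 - xstar‖ ^ 2 :=
    le_geom (u := fun k => ‖x k - xstar‖ ^ 2) hrate n fun k _ => by
      simpa only [hiter k] using sq_norm_gradient_step_sub_le hL hdiff hsmooth hstrong hmin (x k)
  have hvalue : f (x n) - f xstar ≤ L / 2 * ‖x n - xstar‖ ^ 2 := by
    have h := le_add_inner_add_sq_of_lipschitz_gradient hdiff hsmooth xstar (x n)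
    rw [gradient_eq_zero_of_isMinimizer (hdiff xstar) hmin, inner_zero_left, add_zero] at h
    linarith
  calc f (x n) - f xstar ≤ L / 2 * ‖x n - xstar‖ ^ 2 := hvalue
    _ ≤ L / 2 * ((1 - μ / L) ^ n * ‖x 0 - xstar‖ ^ 2) := by gcongr
    _ = L / 2 * (1 - μ / L) ^ n * ‖x 0 - xstar‖ ^ 2 := by ring
end

section
/- Let f : E → ℝ be differentiable, L-smooth, and μ-strongly convex with 0 < μ ≤ L, let x* ∈ E be a global minimizer of f, and let x : ℕ → E be the gradient descent sequence with constant step size λ = 1/L starting from x_0 ≠ x*. Then for any ε > 0 and any n ≥ (L/μ)·ln(L·‖x_0 - x*‖²/(2ε)), one has f(x_n) - f(x*) ≤ ε. -/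
/-!
Each step with step size `1 / L` decreases `f` by at least `‖∇f‖² / (2L)` (descent lemma for an
`L`-Lipschitz gradient), while strong convexity gives the Polyak–Łojasiewicz inequality
`2μ (f x - f x*) ≤ ‖∇f x‖²`. Together the optimality gap contracts by `1 - μ / L` per step.
Since `∇f x* = 0`, the initial gap is at most `L/2 ‖x₀ - x*‖²`, and `(1 - μ/L)ⁿ ≤ exp (-n μ / L)`
turns the geometric rate into the logarithmic iteration bound.
-/

open RealInnerProductSpace Set

lemma one_sub_pow_mul_le_of_inv_mul_log_le {a C ε : ℝ} {n : ℕ} (ha : 0 < a) (ha1 : a ≤ 1)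
    (hC : 0 ≤ C) (hε : 0 < ε) (hn : a⁻¹ * Real.log (C / ε) ≤ n) : (1 - a) ^ n * C ≤ ε := by
  rcases hC.eq_or_lt with rfl | hC
  · simpa using hε.le
  have hlog : Real.log (C / ε) ≤ n * a := by
    rwa [inv_mul_le_iff₀ ha, mul_comm] at hn
  have hC_le : C ≤ ε * Real.exp (n * a) := by
    rw [← div_le_iff₀' hε, ← Real.log_le_iff_le_exp (by positivity)]
    exact hlog
  have hpow : (1 - a) ^ n ≤ Real.exp (-(n * a)) := by
    rw [← mul_neg, Real.exp_nat_mul]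
    exact pow_le_pow_left₀ (sub_nonneg.mpr ha1) (by linarith [Real.add_one_le_exp (-a)]) n
  calc (1 - a) ^ n * C ≤ Real.exp (-(n * a)) * (ε * Real.exp (n * a)) := by gcongr
    _ = ε := by rw [Real.exp_neg]; field_simp

section

variable {E : Type*} [NormedAddCommGroup E] [InnerProductSpace ℝ E] {f : E → ℝ} {f' : E → E}
  {L μ : ℝ}

theorem two_mul_sub_le_norm_sq_of_strongConvex (hμ : 0 < μ)
    (hstrong : ∀ x y, f x + ⟪f' x, y - x⟫ + (μ / 2) * ‖y - x‖ ^ 2 ≤ f y) (x y : E) :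
    2 * μ * (f x - f y) ≤ ‖f' x‖ ^ 2 := by
  have hsq : 0 ≤ ‖f' x + μ • (y - x)‖ ^ 2 := sq_nonneg _
  rw [norm_add_sq_real, inner_smul_right, norm_smul, Real.norm_of_nonneg hμ.le] at hsq
  nlinarith [hstrong x y]

variable [CompleteSpace E]

lemma hasDerivAt_comp_add_smul (hf : ∀ x, HasGradientAt f (f' x) x) (x v : E) (t : ℝ) :
    HasDerivAt (fun t : ℝ => f (x + t • v)) ⟪f' (x + t • v), v⟫ t := by
  have hline : HasDerivAt (fun t : ℝ => x + t • v) v t := by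
    simpa using ((hasDerivAt_id t).smul_const v).const_add x
  exact (hf (x + t • v)).hasFDerivAt.comp_hasDerivAt t hline

theorem le_add_inner_add_half_mul_sq (hf : ∀ x, HasGradientAt f (f' x) x)
    (hL : ∀ x y, ‖f' x - f' y‖ ≤ L * ‖x - y‖) (x y : E) :
    f y ≤ f x + ⟪f' x, y - x⟫ + L / 2 * ‖y - x‖ ^ 2 := by
  set v := y - x
  let φ : ℝ → ℝ := fun t => f (x + t • v) - t * ⟪f' x, v⟫ - L * t ^ 2 / 2 * ‖v‖ ^ 2
  let φ' : ℝ → ℝ := fun t => ⟪f' (x + t • v) - f' x, v⟫ - L * t * ‖v‖ ^ 2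
  have hφ : ∀ t, HasDerivAt φ (φ' t) t := by
    intro t
    have := ((hasDerivAt_comp_add_smul hf x v t).sub ((hasDerivAt_id t).mul_const ⟪f' x, v⟫)).sub
      ((((hasDerivAt_pow 2 t).const_mul L).div_const 2).mul_const (‖v‖ ^ 2))
    exact this.congr_deriv (by simp only [φ', inner_sub_left]; ring)
  have hφ'_nonpos : ∀ t ∈ interior (Icc (0 : ℝ) 1), φ' t ≤ 0 := by
    intro t ht
    rw [interior_Icc] at ht
    have : ⟪f' (x + t • v) - f' x, v⟫ ≤ L * t * ‖v‖ ^ 2 :=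
      calc ⟪f' (x + t • v) - f' x, v⟫ ≤ ‖f' (x + t • v) - f' x‖ * ‖v‖ := real_inner_le_norm _ _
        _ ≤ L * ‖t • v‖ * ‖v‖ := by gcongr; simpa using hL (x + t • v) x
        _ = L * t * ‖v‖ ^ 2 := by rw [norm_smul, Real.norm_of_nonneg ht.1.le]; ring
    exact sub_nonpos.mpr this
  have hanti : AntitoneOn φ (Icc 0 1) :=
    antitoneOn_of_hasDerivWithinAt_nonpos (convex_Icc 0 1)
      (fun t _ => (hφ t).continuousAt.continuousWithinAt)
      (fun t _ => (hφ t).hasDerivWithinAt) hφ'_nonpos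
  have := hanti (left_mem_Icc.mpr zero_le_one) (right_mem_Icc.mpr zero_le_one) zero_le_one
  simp only [φ, one_smul, zero_smul, add_zero, one_pow, one_mul, zero_mul, zero_pow two_ne_zero,
    mul_zero, zero_div, sub_zero, v, add_sub_cancel] at this
  linarith

theorem gradient_eq_zero_of_forall_le {x₀ : E} (hf : HasGradientAt f (f' x₀) x₀)
    (hmin : ∀ y, f x₀ ≤ f y) : f' x₀ = 0 := by
  have hloc : IsLocalMin f x₀ := Filter.Eventually.of_forall hmin
  simpa using hloc.hasFDerivAt_eq_zero hf.hasFDerivAt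

theorem le_sub_norm_sq_of_gradient_step (hL0 : 0 < L) (hf : ∀ x, HasGradientAt f (f' x) x)
    (hL : ∀ x y, ‖f' x - f' y‖ ≤ L * ‖x - y‖) (x : E) :
    f (x - (1 / L) • f' x) ≤ f x - 1 / (2 * L) * ‖f' x‖ ^ 2 := by
  have h := le_add_inner_add_half_mul_sq hf hL x (x - (1 / L) • f' x)
  rw [sub_sub_cancel_left, inner_neg_right, inner_smul_right, real_inner_self_eq_norm_sq, norm_neg,
    norm_smul, Real.norm_of_nonneg (by positivity)] at h
  convert h using 1
  field_simp
  ring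

theorem gradient_step_sub_le (hμ : 0 < μ) (hL0 : 0 < L) (hf : ∀ x, HasGradientAt f (f' x) x)
    (hL : ∀ x y, ‖f' x - f' y‖ ≤ L * ‖x - y‖)
    (hstrong : ∀ x y, f x + ⟪f' x, y - x⟫ + (μ / 2) * ‖y - x‖ ^ 2 ≤ f y) (x y : E) :
    f (x - (1 / L) • f' x) - f y ≤ (1 - μ / L) * (f x - f y) := by
  have hdesc := le_sub_norm_sq_of_gradient_step hL0 hf hL x
  have hPL := two_mul_sub_le_norm_sq_of_strongConvex hμ hstrong x y
  have : μ / L * (f x - f y) ≤ 1 / (2 * L) * ‖f' x‖ ^ 2 := by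
    rw [show μ / L * (f x - f y) = 1 / (2 * L) * (2 * μ * (f x - f y)) by field_simp]
    gcongr
  linarith

theorem gradient_descent_sub_le_pow_mul (hμ : 0 < μ) (hμL : μ ≤ L)
    (hf : ∀ x, HasGradientAt f (f' x) x) (hL : ∀ x y, ‖f' x - f' y‖ ≤ L * ‖x - y‖)
    (hstrong : ∀ x y, f x + ⟪f' x, y - x⟫ + (μ / 2) * ‖y - x‖ ^ 2 ≤ f y)
    {x : ℕ → E} (hx : ∀ k, x (k + 1) = x k - (1 / L) • f' (x k)) (y : E) (n : ℕ) :
    f (x n) - f y ≤ (1 - μ / L) ^ n * (f (x 0) - f y) := by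
  have hL0 : 0 < L := hμ.trans_le hμL
  have hrate : 0 ≤ 1 - μ / L := sub_nonneg.mpr (div_le_one_of_le₀ hμL hL0.le)
  induction n with
  | zero => simp
  | succ k ih =>
    calc f (x (k + 1)) - f y ≤ (1 - μ / L) * (f (x k) - f y) := by
          rw [hx k]; exact gradient_step_sub_le hμ hL0 hf hL hstrong (x k) y
      _ ≤ (1 - μ / L) * ((1 - μ / L) ^ k * (f (x 0) - f y)) := by gcongr
      _ = (1 - μ / L) ^ (k + 1) * (f (x 0) - f y) := by ring

end

theorem gd_strongly_convex_eps_complexity_general {E : Type*} [NormedAddCommGroup E]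
    [InnerProductSpace ℝ E] [CompleteSpace E]
    (f : E → ℝ) (f' : E → E) (L μ : ℝ) (hμ : 0 < μ) (hμL : μ ≤ L)
    (hdiff : ∀ x, HasGradientAt f (f' x) x)
    (hsmooth : ∀ x y, ‖f' x - f' y‖ ≤ L * ‖x - y‖)
    (hstrong : ∀ x y, f x + ⟪f' x, y - x⟫ + (μ / 2) * ‖y - x‖ ^ 2 ≤ f y)
    (xstar : E) (hmin : ∀ y, f xstar ≤ f y)
    (x : ℕ → E)
    (hiter : ∀ k, x (k + 1) = x k - (1 / L) • f' (x k)) :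
    ∀ ε : ℝ, 0 < ε → ∀ n : ℕ,
      (L / μ) * Real.log (L * ‖x 0 - xstar‖ ^ 2 / (2 * ε)) ≤ (n : ℝ) →
      f (x n) - f xstar ≤ ε := by
  intro ε hε n hn
  have hL : 0 < L := hμ.trans_le hμL
  have hgrad : f' xstar = 0 := gradient_eq_zero_of_forall_le (hdiff xstar) hmin
  have hinit : f (x 0) - f xstar ≤ L / 2 * ‖x 0 - xstar‖ ^ 2 := by
    have := le_add_inner_add_half_mul_sq hdiff hsmooth xstar (x 0)
    rw [hgrad, inner_zero_left] at this
    linarith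
  calc f (x n) - f xstar ≤ (1 - μ / L) ^ n * (f (x 0) - f xstar) :=
        gradient_descent_sub_le_pow_mul hμ hμL hdiff hsmooth hstrong hiter xstar n
    _ ≤ (1 - μ / L) ^ n * (L / 2 * ‖x 0 - xstar‖ ^ 2) := by
        have : 0 ≤ 1 - μ / L := sub_nonneg.mpr (div_le_one_of_le₀ hμL hL.le)
        gcongr
    _ ≤ ε := by
        refine one_sub_pow_mul_le_of_inv_mul_log_le (div_pos hμ hL)
          (div_le_one_of_le₀ hμL hL.le) (by positivity) hε ?_
        rwa [inv_div, show L / 2 * ‖x 0 - xstar‖ ^ 2 / ε = L * ‖x 0 - xstar‖ ^ 2 / (2 * ε) by ring]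

theorem gd_strongly_convex_eps_complexity {E : Type*} [NormedAddCommGroup E]
    [InnerProductSpace ℝ E] [CompleteSpace E]
    (f : E → ℝ) (f' : E → E) (L μ : ℝ) (hμ : 0 < μ) (hμL : μ ≤ L)
    (hdiff : ∀ x, HasGradientAt f (f' x) x)
    (hsmooth : ∀ x y, ‖f' x - f' y‖ ≤ L * ‖x - y‖)
    (hstrong : ∀ x y, f x + ⟪f' x, y - x⟫ + (μ / 2) * ‖y - x‖ ^ 2 ≤ f y)
    (xstar : E) (hmin : ∀ y, f xstar ≤ f y)
    (x : ℕ → E)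
    (hiter : ∀ k, x (k + 1) = x k - (1 / L) • f' (x k))
    (hx0 : x 0 ≠ xstar) :
    ∀ ε : ℝ, 0 < ε → ∀ n : ℕ,
      (L / μ) * Real.log (L * ‖x 0 - xstar‖ ^ 2 / (2 * ε)) ≤ (n : ℝ) →
      f (x n) - f xstar ≤ ε :=
  gd_strongly_convex_eps_complexity_general f f' L μ hμ hμL hdiff hsmooth hstrong xstar hmin x hiter
end
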